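/- Let (a, c) be a pair of coprime integers. Then there exist integers b, d with ad − bc = 1 and (a b; c d) ∈ Θ if and only if at least one of a, c is even. Moreover, for a pair of coprime integers (m, n), there exists a matrix (a b; c d) ∈ Θ with a + b = m and c + d = n if and only if m and n are both odd. In other words, the Θ-orbit of ∞ consists exactly of the rationals a/c in lowest terms with a or c even, and the Θ-orbit of 1 consists exactly of the rationals m/n in lowest terms with m and n both odd. -/

import Mathlib

/-!
Everything is decided modulo 2. A coprime pair `(a, c)` with Bézout relation `u a + v c = 1` is the
first column of the determinant-one matrices `(a, -v + k a; c, u + k c)`, whose reductions mod 2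
run through the two elements of `SL(2, 𝔽₂)` with first column `(a, c) mod 2`; when `a` or `c` is
even one of them is `I` or `S = (0 1; 1 0)`. Similarly, for `m, n` odd the matrix
`(m + v, -v; n - u, u)` has column sums `(m, n)` and reduces to `I` or `S` according to the
parity of `u`. Conversely the residues `I` and `S` have first column and column sums of the stated
parities.
-/

/-- The mod-2 condition defining the Theta group `Θ`: the entries of the matrix
are congruent mod 2 to `(1 0; 0 1)` or `(0 1; 1 0)`. -/
def ThetaMod2 (a b c d : ℤ) : Prop :=
  ((a : ZMod 2), (b : ZMod 2), (c : ZMod 2), (d : ZMod 2)) ∈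
    ({(1, 0, 0, 1), (0, 1, 1, 0)} :
      Set (ZMod 2 × ZMod 2 × ZMod 2 × ZMod 2))

theorem thetaMod2_iff {a b c d : ℤ} :
    ThetaMod2 a b c d ↔
      (a : ZMod 2) = 1 ∧ (b : ZMod 2) = 0 ∧ (c : ZMod 2) = 0 ∧ (d : ZMod 2) = 1 ∨
      (a : ZMod 2) = 0 ∧ (b : ZMod 2) = 1 ∧ (c : ZMod 2) = 1 ∧ (d : ZMod 2) = 0 := by
  simp only [ThetaMod2, Set.mem_insert_iff, Set.mem_singleton_iff, Prod.mk.injEq]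

theorem ThetaMod2.even_or_even {a b c d : ℤ} (h : ThetaMod2 a b c d) : Even a ∨ Even c := by
  simp only [← ZMod.intCast_eq_zero_iff_even]
  rcases thetaMod2_iff.1 h with ⟨-, -, hc, -⟩ | ⟨ha, -⟩
  exacts [.inr hc, .inl ha]

theorem ThetaMod2.odd_add {a b c d : ℤ} (h : ThetaMod2 a b c d) :
    Odd (a + b) ∧ Odd (c + d) := by
  simp only [← ZMod.intCast_eq_one_iff_odd, Int.cast_add]
  rcases thetaMod2_iff.1 h with ⟨ha, hb, hc, hd⟩ | ⟨ha, hb, hc, hd⟩ <;>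
    simp [ha, hb, hc, hd]

theorem exists_thetaMod2_of_isCoprime {a c : ℤ} (hac : IsCoprime a c) (h : Even a ∨ Even c) :
    ∃ b d, a * d - b * c = 1 ∧ ThetaMod2 a b c d := by
  obtain ⟨u, v, huv⟩ := hac
  suffices ThetaMod2 a (-v) c u ∨ ThetaMod2 a (-v + a) c (u + c) by
    rcases this with h0 | h1
    · exact ⟨-v, u, by linear_combination huv, h0⟩
    · exact ⟨-v + a, u + c, by linear_combination huv, h1⟩
  have huv2 : (u : ZMod 2) * a + v * c = 1 := by
    exact_mod_cast congrArg (Int.cast : ℤ → ZMod 2) huv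
  simp only [← ZMod.intCast_eq_zero_iff_even] at h
  simp only [thetaMod2_iff, Int.cast_add, Int.cast_neg]
  generalize (a : ZMod 2) = a', (c : ZMod 2) = c', (u : ZMod 2) = u', (v : ZMod 2) = v' at *
  revert a' c' u' v'; decide

theorem exists_thetaMod2_add_eq {m n : ℤ} (hmn : IsCoprime m n) (hm : Odd m) (hn : Odd n) :
    ∃ a b c d, a * d - b * c = 1 ∧ ThetaMod2 a b c d ∧ a + b = m ∧ c + d = n := by
  obtain ⟨u, v, huv⟩ := hmn
  refine ⟨m + v, -v, n - u, u, by linear_combination huv, ?_, by ring, by ring⟩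
  have huv2 : (u : ZMod 2) * m + v * n = 1 := by
    exact_mod_cast congrArg (Int.cast : ℤ → ZMod 2) huv
  rw [← ZMod.intCast_eq_one_iff_odd] at hm hn
  simp only [thetaMod2_iff, Int.cast_add, Int.cast_neg, Int.cast_sub]
  generalize (m : ZMod 2) = m', (n : ZMod 2) = n', (u : ZMod 2) = u', (v : ZMod 2) = v' at *
  subst hm hn
  revert u' v'; decide

/-- Lemma 13: for coprime `(a,c)`, there exist `b, d` with `ad − bc = 1` and
`(a b; c d) ∈ Θ` iff `a` or `c` is even; and for coprime `(m,n)` there is a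
matrix `(a b; c d) ∈ Θ` with `a + b = m`, `c + d = n` iff `m` and `n` are both
odd.  In other words, `Θ∞ = {a/c : a or c even}` and `Θ1 = {m/n : m, n odd}`. -/
theorem Theta_orbits_of_infty_and_one :
    (∀ a c : ℤ, IsCoprime a c →
      ((∃ b d : ℤ, a * d - b * c = 1 ∧ ThetaMod2 a b c d) ↔
        (Even a ∨ Even c))) ∧
    (∀ m n : ℤ, IsCoprime m n →
      ((∃ a b c d : ℤ, a * d - b * c = 1 ∧ ThetaMod2 a b c d ∧
          a + b = m ∧ c + d = n) ↔ (Odd m ∧ Odd n))) := by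
  refine ⟨fun a c hac => ⟨?_, exists_thetaMod2_of_isCoprime hac⟩,
    fun m n hmn => ⟨?_, fun ⟨hm, hn⟩ => exists_thetaMod2_add_eq hmn hm hn⟩⟩
  · rintro ⟨b, d, -, h⟩
    exact h.even_or_even
  · rintro ⟨a, b, c, d, -, h, rfl, rfl⟩
    exact h.odd_add
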